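/- arXiv:1311.5090 — 2 statements merged into one kernel-verified Lean document; each statement's English description precedes it below -/
import Mathlib

section
/- Let F be a prime field and P: F^n → F a polynomial. If bias(P) := |E_x e_F(P(x))| ≥ δ, then for any two distinct field elements a ≠ b, the distributions μ_a(t) := Pr_x[P(x) = a + t] and μ_b(t) := Pr_x[P(x) = b + t] on F satisfy ‖μ_a − μ_b‖_1 ≥ 4δ/|F|. -/
open scoped BigOperators
open Finset MvPolynomial

/-- `e_F(c) = exp(2πi c / p)`. -/
noncomputable def eF (p : ℕ) (c : ZMod p) : ℂ :=
  Complex.exp (2 * Real.pi * Complex.I * (c.val : ℂ) / (p : ℂ))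

/-- Expectation over a finite type. -/
noncomputable def expect {α : Type*} [Fintype α] (f : α → ℂ) : ℂ :=
  (∑ a, f a) / (Fintype.card α : ℂ)

/-- bias of an `F`-valued function. -/
noncomputable def bias {α : Type*} [Fintype α] (p : ℕ) (f : α → ZMod p) : ℝ :=
  ‖expect fun a => eF p (f a)‖

/-- Gowers uniformity norm `‖f‖_{U^k}`. -/
noncomputable def gowers {G : Type*} [AddCommGroup G] [Fintype G] (k : ℕ) (f : G → ℂ) : ℝ :=
  (‖expect fun xh : G × (Fin k → G) =>
    ∏ S : Finset (Fin k), (starRingEnd ℂ)^[k - S.card] (f (xh.1 + ∑ i ∈ S, xh.2 i))‖) ^ ((1:ℝ) / 2 ^ k)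

/-- Probability that a predicate holds for a uniformly random element. -/
noncomputable def prob {α : Type*} [Fintype α] (Q : α → Prop) [DecidablePred Q] : ℝ :=
  ((Finset.univ.filter Q).card : ℝ) / (Fintype.card α : ℝ)

/-!
With `ν s = Pr[P = s]`, the bias is the modulus of the Fourier coefficient `∑ s, ν s e(s)`.
Shifting `ν` by `c` multiplies that coefficient by `e(-c)`, so
`∑ t, (μ_a t - μ_b t) e(t) = (e(-a) - e(-b)) ∑ s, ν s e(s)`; the left side has modulus at most
`‖μ_a - μ_b‖₁`, and `|e(-a) - e(-b)| = |e(b - a) - 1| = 2 |sin (π j / p)| ≥ 4 / p` by Jordan's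
inequality, where `j` is the representative of `b - a` in `(-p/2, p/2]`.
-/

open Real Complex in
lemma ZMod.four_div_le_norm_stdAddChar_sub_one {p : ℕ} [NeZero p] {c : ZMod p} (hc : c ≠ 0) :
    4 / p ≤ ‖ZMod.stdAddChar c - 1‖ := by
  have hp : (0 : ℝ) < p := by exact_mod_cast Nat.pos_of_neZero p
  set j := c.valMinAbs with hj
  have hj_one : (1 : ℝ) ≤ |(j : ℝ)| := by
    rw [← Int.cast_abs]
    exact_mod_cast Int.one_le_abs (by rwa [Ne, ZMod.valMinAbs_eq_zero])
  have hj_half : |(j : ℝ)| ≤ p / 2 := by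
    obtain ⟨hlow, hhigh⟩ := c.valMinAbs_mem_Ioc
    have hlow' : (-p : ℝ) < j * 2 := by exact_mod_cast hlow
    have hhigh' : (j : ℝ) * 2 ≤ p := by exact_mod_cast hhigh
    rw [abs_le]
    constructor <;> linarith
  have habs : |π * j / p| = π * |(j : ℝ)| / p := by
    rw [abs_div, abs_mul, abs_of_pos Real.pi_pos, abs_of_pos hp]
  have hchar : ZMod.stdAddChar c = exp (I * ↑(2 * π * j / p)) := by
    rw [← c.coe_valMinAbs, ← hj, ZMod.stdAddChar_coe]
    push_cast
    ring_nf
  calc 4 / (p : ℝ) ≤ 2 * (2 / π * |π * j / p|) := by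
        rw [habs]
        field_simp
        linarith
    _ ≤ 2 * |Real.sin (π * j / p)| := by
        gcongr
        refine Real.mul_abs_le_abs_sin ?_
        rw [habs, div_le_iff₀ hp]
        nlinarith [Real.pi_pos]
    _ = ‖ZMod.stdAddChar c - 1‖ := by
        rw [hchar, norm_exp_I_mul_ofReal_sub_one, norm_mul, Real.norm_eq_abs, Real.norm_eq_abs,
          abs_two]
        ring_nf

lemma eF_eq_stdAddChar (p : ℕ) [NeZero p] : eF p = ZMod.stdAddChar := by
  ext c
  rw [ZMod.stdAddChar_apply, ZMod.toCircle_apply, eF]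

namespace AddChar

variable {G R : Type*} [AddCommGroup G] [Fintype G]

lemma sum_shift_mul [CommRing R] (ψ : AddChar G R) (ν : G → R) (c : G) :
    ∑ t, ν (c + t) * ψ t = ψ (-c) * ∑ s, ν s * ψ s := by
  symm
  rw [Finset.mul_sum, ← Equiv.sum_comp (Equiv.addLeft c)]
  refine Finset.sum_congr rfl fun t _ => ?_
  rw [Equiv.coe_addLeft, mul_left_comm, ← map_add_eq_mul, neg_add_cancel_left]

lemma sum_sub_shift_mul [CommRing R] (ψ : AddChar G R) (ν : G → R) (a b : G) :
    ∑ t, (ν (a + t) - ν (b + t)) * ψ t = (ψ (-a) - ψ (-b)) * ∑ s, ν s * ψ s := by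
  simp only [sub_mul, Finset.sum_sub_distrib, sum_shift_mul]

lemma norm_apply_neg_sub_apply_neg (ψ : AddChar G ℂ) (a b : G) :
    ‖ψ (-a) - ψ (-b)‖ = ‖ψ (b - a) - 1‖ := by
  rw [show -a = (b - a) + -b by abel, map_add_eq_mul, ← sub_one_mul, norm_mul, ψ.norm_apply,
    mul_one]

end AddChar

lemma expect_comp_eq_sum_prob {α G : Type*} [Fintype α] [Fintype G] [DecidableEq G]
    (f : α → G) (g : G → ℂ) :
    expect (fun x => g (f x)) = ∑ s, (prob (fun x => f x = s) : ℂ) * g s := by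
  rw [_root_.expect, ← Finset.sum_fiberwise' Finset.univ f g, Finset.sum_div]
  refine Finset.sum_congr rfl fun s _ => ?_
  rw [Finset.sum_const, nsmul_eq_mul, prob]
  push_cast
  ring

theorem four_mul_bias_div_le_sum_abs_prob_sub {α : Type*} [Fintype α] {p : ℕ} [NeZero p]
    (f : α → ZMod p) {a b : ZMod p} (hab : a ≠ b) :
    4 * bias p f / p ≤ ∑ t, |prob (fun x => f x = a + t) - prob (fun x => f x = b + t)| := by
  set ψ : AddChar (ZMod p) ℂ := ZMod.stdAddChar
  set ν : ZMod p → ℂ := fun s => prob (fun x => f x = s)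
  have hbias : bias p f = ‖∑ s, ν s * ψ s‖ := by
    rw [bias, expect_comp_eq_sum_prob f (eF p), eF_eq_stdAddChar]
  calc 4 * bias p f / p = 4 / p * ‖∑ s, ν s * ψ s‖ := by rw [hbias]; ring
    _ ≤ ‖ψ (b - a) - 1‖ * ‖∑ s, ν s * ψ s‖ := by
        gcongr
        exact ZMod.four_div_le_norm_stdAddChar_sub_one (sub_ne_zero.mpr hab.symm)
    _ = ‖∑ t, (ν (a + t) - ν (b + t)) * ψ t‖ := by
        rw [ψ.sum_sub_shift_mul, norm_mul, ψ.norm_apply_neg_sub_apply_neg]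
    _ ≤ ∑ t, ‖(ν (a + t) - ν (b + t)) * ψ t‖ := norm_sum_le _ _
    _ = _ := by
        refine Finset.sum_congr rfl fun t _ => ?_
        rw [norm_mul, ψ.norm_apply, mul_one, ← Complex.ofReal_sub, Complex.norm_real,
          Real.norm_eq_abs]

theorem stmt0 (p n : ℕ) [Fact p.Prime] (Q : MvPolynomial (Fin n) (ZMod p)) (δ : ℝ)
    (hδ : δ ≤ bias p (fun x : Fin n → ZMod p => eval x Q))
    (a b : ZMod p) (hab : a ≠ b) :
    4 * δ / p ≤ ∑ t : ZMod p,
      |prob (fun x : Fin n → ZMod p => eval x Q = a + t)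
        - prob (fun x : Fin n → ZMod p => eval x Q = b + t)| := by
  refine le_trans ?_ (four_mul_bias_div_le_sum_abs_prob_sub _ hab)
  gcongr
end

section
/- Vanishing linear combination gives degree bound reduction: Suppose P_1,…,P_m: F^n → F are polynomials and for some r ≥ 1 and coefficients c_{i,I} ∈ F (i ∈ [m], I ⊆ [r]) not all zero, the polynomial identity Σ_{i,I} c_{i,I} P_i(x + Σ_{j∈I} y_j) ≡ 0 holds in the variables x, y_1,…,y_r. If I₀ is maximal (under inclusion) among sets with some c_{i,I₀} ≠ 0 and c_{i₀,I₀} ≠ 0, then the polynomial Σ_i c_{i,I₀}·D_{h_1}⋯D_{h_{|I₀|}} P_i is identically zero for all directions h_1,…,h_{|I₀|} obtained from restricting to the coordinates of y_j, j ∈ I₀. -/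
open scoped BigOperators
open Finset MvPolynomial

/-! Enumerate `I₀` by `e`, substitute `y j = ∑ {h t | t ∈ T, e t = j}` into the identity and
take the alternating sum over `T`. A term with `I ⊉ I₀` only sees `T ∩ {t | e t ∈ I}`, so adding
or removing a direction `t` with `e t ∉ I` flips its sign and these terms cancel; terms with
`I ⊋ I₀` have zero coefficient by maximality. Only `I = I₀` survives, where the substitution gives
`x + ∑ t ∈ T, h t`. -/

theorem Finset.sum_powerset_neg_one_pow_card_sub_mul_inter_eq_zero {ι R : Type*}
    [DecidableEq ι] [CommRing R] {s A : Finset ι} (hsA : ¬ s ⊆ A) (g : Finset ι → R) :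
    ∑ T ∈ s.powerset, (-1 : R) ^ (s.card - T.card) * g (T ∩ A) = 0 := by
  obtain ⟨a, has, haA⟩ := not_subset.mp hsA
  rw [← insert_erase has, sum_powerset_insert (notMem_erase a s), ← sum_add_distrib,
    card_insert_of_notMem (notMem_erase a s)]
  refine sum_eq_zero fun t ht => ?_
  have hat : a ∉ t := fun hat => notMem_erase a s (mem_powerset.mp ht hat)
  have htcard : t.card ≤ (s.erase a).card := card_le_card (mem_powerset.mp ht)
  rw [insert_inter_of_notMem haA, card_insert_of_notMem hat,
    show (s.erase a).card + 1 - t.card = (s.erase a).card - t.card + 1 by omega,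
    Nat.add_sub_add_right, pow_succ]
  ring

theorem sum_neg_one_pow_mul_apply_sum_filter_eq_zero {ι G R : Type*} [Fintype ι]
    [DecidableEq ι] [AddCommMonoid G] [CommRing R] (p : ι → Prop) [DecidablePred p]
    (hp : ¬ ∀ t, p t) (φ : G → R) (x : G) (h : ι → G) :
    ∑ T : Finset ι, (-1 : R) ^ (Fintype.card ι - T.card) * φ (x + ∑ t ∈ T with p t, h t) = 0 := by
  have hA : ¬ (univ : Finset ι) ⊆ univ.filter p := fun hsub =>
    hp fun t => by simpa using hsub (mem_univ t)
  simpa only [powerset_univ, card_univ, inter_filter, inter_univ] using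
    sum_powerset_neg_one_pow_card_sub_mul_inter_eq_zero hA fun S => φ (x + ∑ t ∈ S, h t)

theorem sum_mul_sum_neg_one_pow_mul_eq_zero_of_maximal {μ ι κ G R : Type*} [Fintype μ]
    [Fintype ι] [DecidableEq ι] [Fintype κ] [DecidableEq κ] [AddCommMonoid G] [CommRing R]
    (f : μ → G → R) (c : μ → Finset κ → R)
    (hzero : ∀ (x : G) (y : κ → G), ∑ i, ∑ I : Finset κ, c i I * f i (x + ∑ j ∈ I, y j) = 0)
    (e : ι → κ) (hmax : ∀ i J, univ.image e ⊂ J → c i J = 0) (x : G) (h : ι → G) :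
    ∑ i, c i (univ.image e) * ∑ S : Finset ι,
      (-1 : R) ^ (Fintype.card ι - S.card) * f i (x + ∑ t ∈ S, h t) = 0 := by
  have hsubst : ∀ T : Finset ι,
      ∑ i, ∑ I : Finset κ, c i I * f i (x + ∑ t ∈ T with e t ∈ I, h t) = 0 := fun T => by
    simpa only [sum_fiberwise_eq_sum_filter] using hzero x fun j => ∑ t ∈ T with e t = j, h t
  have hkill : ∀ i (I : Finset κ), I ≠ univ.image e → c i I * ∑ T : Finset ι,
      (-1 : R) ^ (Fintype.card ι - T.card) * f i (x + ∑ t ∈ T with e t ∈ I, h t) = 0 := by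
    intro i I hI
    by_cases hsub : univ.image e ⊆ I
    · rw [hmax i I (hsub.ssubset_of_ne hI.symm), zero_mul]
    · refine mul_eq_zero_of_right _ (sum_neg_one_pow_mul_apply_sum_filter_eq_zero _ ?_ _ x h)
      exact fun hall => hsub fun j hj => by
        obtain ⟨t, -, rfl⟩ := mem_image.mp hj
        exact hall t
  calc ∑ i, c i (univ.image e) * ∑ S : Finset ι,
        (-1 : R) ^ (Fintype.card ι - S.card) * f i (x + ∑ t ∈ S, h t)
      = ∑ i, ∑ I : Finset κ, c i I * ∑ T : Finset ι,
        (-1 : R) ^ (Fintype.card ι - T.card) * f i (x + ∑ t ∈ T with e t ∈ I, h t) := by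
        refine sum_congr rfl fun i _ => ?_
        rw [sum_eq_single (univ.image e) (fun I _ hI => hkill i I hI) (by simp)]
        simp only [mem_image_of_mem e (mem_univ _), filter_true_of_mem, implies_true]
    _ = ∑ T : Finset ι, (-1 : R) ^ (Fintype.card ι - T.card) *
        ∑ i, ∑ I : Finset κ, c i I * f i (x + ∑ t ∈ T with e t ∈ I, h t) := by
        simp only [mul_sum, mul_left_comm]
        exact (sum_congr rfl fun _ _ => sum_comm).trans sum_comm
    _ = 0 := by simp only [hsubst, mul_zero, sum_const_zero]

theorem stmt18_general {F : Type*} [Field F] (n m r : ℕ)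
    (P : Fin m → MvPolynomial (Fin n) F) (c : Fin m → Finset (Fin r) → F)
    (hzero : ∀ (x : Fin n → F) (y : Fin r → Fin n → F),
      ∑ i, ∑ I : Finset (Fin r), c i I * eval (x + ∑ j ∈ I, y j) (P i) = 0)
    (I₀ : Finset (Fin r))
    (hmax : ∀ (i : Fin m) (J : Finset (Fin r)), I₀ ⊂ J → c i J = 0) :
    ∀ (x : Fin n → F) (h : Fin I₀.card → Fin n → F),
      ∑ i, c i I₀ * ∑ S : Finset (Fin I₀.card),
          (-1 : F) ^ (I₀.card - S.card) * eval (x + ∑ j ∈ S, h j) (P i) = 0 := by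
  intro x h
  have hI₀ := I₀.image_orderEmbOfFin_univ rfl
  have key := sum_mul_sum_neg_one_pow_mul_eq_zero_of_maximal (fun i v => eval v (P i)) c hzero
    (I₀.orderEmbOfFin rfl) (by rwa [hI₀]) x h
  rwa [hI₀, Fintype.card_fin] at key

theorem stmt18 {F : Type*} [Field F] [Fintype F] (n m r : ℕ)
    (P : Fin m → MvPolynomial (Fin n) F) (c : Fin m → Finset (Fin r) → F)
    (hzero : ∀ (x : Fin n → F) (y : Fin r → Fin n → F),
      ∑ i, ∑ I : Finset (Fin r), c i I * eval (x + ∑ j ∈ I, y j) (P i) = 0)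
    (I₀ : Finset (Fin r)) (i₀ : Fin m) (hne : c i₀ I₀ ≠ 0)
    (hmax : ∀ (i : Fin m) (J : Finset (Fin r)), I₀ ⊂ J → c i J = 0) :
    ∀ (x : Fin n → F) (h : Fin I₀.card → Fin n → F),
      ∑ i, c i I₀ * ∑ S : Finset (Fin I₀.card),
          (-1 : F) ^ (I₀.card - S.card) * eval (x + ∑ j ∈ S, h j) (P i) = 0 :=
  stmt18_general n m r P c hzero I₀ hmax
end
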